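/- arXiv:2304.08930 — 5 statements merged into one kernel-verified Lean document; each statement's English description precedes it below -/
import Mathlib

section
/- Let A, B, C be real numbers with C ≠ 0, and suppose that A < 0 implies A² < 4B. Then the cubic equation y³ + 2A y² + (A² − 4B) y − C² = 0 has exactly one positive real solution. -/
theorem cubic_unique_positive_root (A B C : ℝ) (hC : C ≠ 0)
    (hAB : A < 0 → A ^ 2 < 4 * B) :
    ∃! y : ℝ, 0 < y ∧ y ^ 3 + 2 * A * y ^ 2 + (A ^ 2 - 4 * B) * y - C ^ 2 = 0 := by
  have hC2 : 0 < C ^ 2 := by positivity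
  set f : ℝ → ℝ := fun y => y ^ 3 + 2 * A * y ^ 2 + (A ^ 2 - 4 * B) * y - C ^ 2 with hf
  -- Existence via IVT
  have hex : ∃ y : ℝ, 0 < y ∧ f y = 0 := by
    set M : ℝ := 1 + |2 * A| + |A ^ 2 - 4 * B| + C ^ 2 with hM
    have hM1 : 1 ≤ M := by
      have := abs_nonneg (2*A); have := abs_nonneg (A^2-4*B); nlinarith
    have hM0 : (0:ℝ) ≤ M := by linarith
    have hfM : 0 < f M := by
      have h1 : -(|2*A|) ≤ 2*A := neg_abs_le _
      have h2 : -(|A^2-4*B|) ≤ A^2-4*B := neg_abs_le _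
      have hA1 : 0 ≤ |2*A| := abs_nonneg _
      have hA2 : 0 ≤ |A^2-4*B| := abs_nonneg _
      have key : M - |2*A| - |A^2-4*B| - C^2 = 1 := by ring
      simp only [hf]
      nlinarith [sq_nonneg M, mul_le_mul_of_nonneg_left h1 (mul_nonneg hM0 hM0),
        mul_le_mul_of_nonneg_left h2 hM0, sq_nonneg (M-1)]
    have hf0 : f 0 < 0 := by simp [hf]; nlinarith
    have hcont : ContinuousOn f (Set.Icc 0 M) := by fun_prop
    have h0mem : (0:ℝ) ∈ Set.Icc (f 0) (f M) := ⟨le_of_lt hf0, le_of_lt hfM⟩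
    obtain ⟨y, hyI, hy0⟩ := intermediate_value_Icc hM0 hcont h0mem
    refine ⟨y, ?_, hy0⟩
    rcases lt_or_eq_of_le hyI.1 with h | h
    · exact h
    · exfalso; rw [← h] at hy0; linarith [hf0, hy0.symm ▸ hy0]
  obtain ⟨y, hy, hfy⟩ := hex
  refine ⟨y, ⟨hy, hfy⟩, ?_⟩
  rintro z ⟨hz, hfz⟩
  by_contra hne
  -- Vieta-style uniqueness argument
  have hQ : z ^ 2 + z * y + y ^ 2 + 2 * A * (z + y) + (A ^ 2 - 4 * B) = 0 := by
    have hfy' : y ^ 3 + 2 * A * y ^ 2 + (A ^ 2 - 4 * B) * y - C ^ 2 = 0 := hfy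
    have hsub : (z - y) * (z ^ 2 + z * y + y ^ 2 + 2 * A * (z + y) + (A ^ 2 - 4 * B)) = 0 := by
      linear_combination hfz - hfy'
    rcases mul_eq_zero.mp hsub with h | h
    · exact absurd (by linarith [sub_eq_zero.mp h] : z = y) hne
    · exact h
  have hfz' : z ^ 3 + 2 * A * z ^ 2 + (A ^ 2 - 4 * B) * z - C ^ 2 = 0 := hfz
  -- the third root: z * y * (-2A - z - y) = C^2
  have hy3 : z * y * (-2 * A - z - y) = C ^ 2 := by nlinarith [hfz', hQ]
  have hp : 0 < z * y := mul_pos hz hy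
  rcases lt_or_ge A 0 with hA | hA
  · have hB := hAB hA
    have hy3pos : 0 < -2 * A - z - y := by
      by_contra h
      push_neg at h
      nlinarith
    nlinarith [mul_pos hp hy3pos, sq_nonneg (z + y), mul_pos (mul_pos hz hy) hy3pos]
  · have hy3neg : -2 * A - z - y < 0 := by linarith
    nlinarith [mul_neg_of_pos_of_neg hp hy3neg]
end

section
/- Let A, B, C be real numbers with B ≥ 0, C ≠ 0, and suppose A < 0 implies A² < 4B. If z is the unique positive solution of z³ + 2Az² + (A² − 4B)z − C² = 0, and W = ±√z, Y = (W³ + AW + C)/(2W), then (W, Y) satisfies the system Y² − (A + W²)Y + B = 0 and W³ + (A − 2Y)W + C = 0. -/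
/-!
Clearing the denominator of `Y` gives `2WY = W³ + AW + C`, which is the second equation. Writing
`P = W³ + AW`, the first equation multiplied by `4W²` becomes `C² - P² + 4BW²`, which is minus
the cubic evaluated at `z = W²`.
-/

theorem quadratic_and_cubic_of_resolvent_root {K : Type*} [Field K] [NeZero (2 : K)]
    {A B C W Y : K} (hW : W ≠ 0) (hY : 2 * W * Y = W ^ 3 + A * W + C)
    (hroot : (W ^ 2) ^ 3 + 2 * A * (W ^ 2) ^ 2 + (A ^ 2 - 4 * B) * W ^ 2 - C ^ 2 = 0) :
    Y ^ 2 - (A + W ^ 2) * Y + B = 0 ∧ W ^ 3 + (A - 2 * Y) * W + C = 0 := by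
  refine ⟨?_, by linear_combination -hY⟩
  have h4W2 : (4 * W ^ 2 : K) ≠ 0 := by
    have : (4 : K) = 2 * 2 := by norm_num
    rw [this]
    exact mul_ne_zero (mul_ne_zero two_ne_zero two_ne_zero) (pow_ne_zero 2 hW)
  refine (mul_eq_zero.mp ?_).resolve_left h4W2
  linear_combination (2 * W * Y + W ^ 3 + A * W + C - 2 * W * (A + W ^ 2)) * hY - hroot

theorem Real.sq_eq_of_eq_sqrt_or_neg {z W : ℝ} (hz : 0 ≤ z)
    (hW : W = Real.sqrt z ∨ W = -Real.sqrt z) : W ^ 2 = z := by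
  rcases hW with rfl | rfl
  · exact Real.sq_sqrt hz
  · rw [neg_sq, Real.sq_sqrt hz]

theorem system_case3_general (A B C z W Y : ℝ) (hz : 0 < z)
    (hroot : z ^ 3 + 2 * A * z ^ 2 + (A ^ 2 - 4 * B) * z - C ^ 2 = 0)
    (hW : W = Real.sqrt z ∨ W = -Real.sqrt z)
    (hY : Y = (W ^ 3 + A * W + C) / (2 * W)) :
    Y ^ 2 - (A + W ^ 2) * Y + B = 0 ∧ W ^ 3 + (A - 2 * Y) * W + C = 0 := by
  have hW2 : W ^ 2 = z := Real.sq_eq_of_eq_sqrt_or_neg hz.le hW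
  have hW0 : W ≠ 0 := by
    rintro rfl
    exact hz.ne (by simpa using hW2)
  have hY' : 2 * W * Y = W ^ 3 + A * W + C := by
    rw [hY]
    field_simp
  exact quadratic_and_cubic_of_resolvent_root hW0 hY' (hW2 ▸ hroot)

theorem system_case3 (A B C z W Y : ℝ) (hB : 0 ≤ B) (hC : C ≠ 0)
    (hAB : A < 0 → A ^ 2 < 4 * B) (hz : 0 < z)
    (hroot : z ^ 3 + 2 * A * z ^ 2 + (A ^ 2 - 4 * B) * z - C ^ 2 = 0)
    (hW : W = Real.sqrt z ∨ W = -Real.sqrt z)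
    (hY : Y = (W ^ 3 + A * W + C) / (2 * W)) :
    Y ^ 2 - (A + W ^ 2) * Y + B = 0 ∧ W ^ 3 + (A - 2 * Y) * W + C = 0 :=
  system_case3_general A B C z W Y hz hroot hW hY
end

section
/- In Hamilton's quaternions ℍ(−1,−1), let b ∈ ℝ and c ∉ ℝ with c = c₀ + c₁e₁ + c₂e₂ + c₃e₃, and set m = √((b² − 4c₀ + √((b² − 4c₀)² + 16(c₁² + c₂² + c₃²)))/2). Then x = −b/2 + m/2 − (c₁/m)e₁ − (c₂/m)e₂ − (c₃/m)e₃ satisfies x² + bx + c = 0. -/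
open Quaternion

/-!
Writing `x = r + v` with `v` pure, `x² + b x + c` has imaginary part `(2r + b) v + Im c` and real
part `r² + b r - |v|² + Re c`. The choice `r = (m - b)/2`, `v = -Im c / m` kills the imaginary part,
and the real part becomes `(m⁴ - (b² - 4c₀) m² - 4|Im c|²) / (4m²)`, which vanishes because `m²` is
the positive root of `t² - (b² - 4c₀) t - 4|Im c|²`.
-/

theorem Quaternion.sq_add_coe_mul_add {R : Type*} [CommRing R] (x c : ℍ[R]) (b : R) :
    x ^ 2 + (b : ℍ[R]) * x + c =
      ⟨x.re ^ 2 + b * x.re - (x.imI ^ 2 + x.imJ ^ 2 + x.imK ^ 2) + c.re,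
        (2 * x.re + b) * x.imI + c.imI, (2 * x.re + b) * x.imJ + c.imJ,
        (2 * x.re + b) * x.imK + c.imK⟩ := by
  ext <;> simp only [pow_two, re_add, imI_add, imJ_add, imK_add, re_mul, imI_mul, imJ_mul,
    imK_mul, re_coe, imI_coe, imJ_coe, imK_coe] <;> ring

section QuadraticRoot

variable {A s : ℝ}

theorem quadratic_root_pos (hs : 0 < s) : 0 < (A + √(A ^ 2 + 4 * s)) / 2 := by
  have : |A| < √(A ^ 2 + 4 * s) := by
    rw [← Real.sqrt_sq_eq_abs]
    exact Real.sqrt_lt_sqrt (sq_nonneg A) (by linarith)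
  linarith [neg_abs_le A]

theorem quadratic_root_sq (hs : 0 ≤ s) :
    ((A + √(A ^ 2 + 4 * s)) / 2) ^ 2 = A * ((A + √(A ^ 2 + 4 * s)) / 2) + s := by
  have := Real.sq_sqrt (by positivity : 0 ≤ A ^ 2 + 4 * s)
  linear_combination this / 4

theorem sqrt_quadratic_root_pos_and_pow_four (hs : 0 < s) {m : ℝ}
    (hm : m = √((A + √(A ^ 2 + 4 * s)) / 2)) :
    0 < m ∧ m ^ 4 = A * m ^ 2 + s := by
  have hroot := quadratic_root_pos (A := A) hs
  have hm2 : m ^ 2 = (A + √(A ^ 2 + 4 * s)) / 2 := by rw [hm, Real.sq_sqrt hroot.le]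
  refine ⟨hm ▸ Real.sqrt_pos.mpr hroot, ?_⟩
  rw [show m ^ 4 = (m ^ 2) ^ 2 by ring, hm2]
  exact quadratic_root_sq hs.le

end QuadraticRoot

theorem case3_solution (b c₀ c₁ c₂ c₃ m : ℝ) (x c : ℍ[ℝ])
    (hc : ¬(c₁ = 0 ∧ c₂ = 0 ∧ c₃ = 0))
    (hcdef : c = ⟨c₀, c₁, c₂, c₃⟩)
    (hm : m = Real.sqrt ((b ^ 2 - 4 * c₀ +
      Real.sqrt ((b ^ 2 - 4 * c₀) ^ 2 + 16 * (c₁ ^ 2 + c₂ ^ 2 + c₃ ^ 2))) / 2))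
    (hx : x = ⟨-b / 2 + m / 2, -c₁ / m, -c₂ / m, -c₃ / m⟩) :
    x ^ 2 + (b : ℍ[ℝ]) * x + c = 0 := by
  have hS : 0 < 4 * (c₁ ^ 2 + c₂ ^ 2 + c₃ ^ 2) := by
    contrapose! hc
    refine ⟨?_, ?_, ?_⟩ <;> nlinarith [sq_nonneg c₁, sq_nonneg c₂, sq_nonneg c₃]
  obtain ⟨hm_pos, hm4⟩ := sqrt_quadratic_root_pos_and_pow_four (A := b ^ 2 - 4 * c₀) hS (m := m)
    (by rw [hm]; ring_nf)
  rw [sq_add_coe_mul_add, hx, hcdef]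
  ext <;> simp only [re_zero, imI_zero, imJ_zero, imK_zero]
  · field_simp
    linear_combination hm4
  all_goals field_simp; ring
end

section
/- In Hamilton's quaternions, if b ∈ ℝ, c ∈ ℝ (as real scalar quaternions), and b² − 4c = 0, then x = −b/2 is the unique quaternion solution of x² + bx + c = 0. -/
open Quaternion

theorem double_root_unique (b c : ℝ) (h : b ^ 2 - 4 * c = 0) (x : ℍ[ℝ]) :
    x ^ 2 + (b : ℍ[ℝ]) * x + (c : ℍ[ℝ]) = 0 ↔ x = ((-b / 2 : ℝ) : ℍ[ℝ]) := by
  have hc : c = (b / 2) ^ 2 := by nlinarith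
  have hcomm : ((b / 2 : ℝ) : ℍ[ℝ]) * x = x * ((b / 2 : ℝ) : ℍ[ℝ]) :=
    Quaternion.coe_commutes _ _
  have hb : (b : ℍ[ℝ]) = ((b / 2 : ℝ) : ℍ[ℝ]) + ((b / 2 : ℝ) : ℍ[ℝ]) := by
    rw [← Quaternion.coe_add]; norm_num
  have key : x ^ 2 + (b : ℍ[ℝ]) * x + (c : ℍ[ℝ]) = (x + ((b / 2 : ℝ) : ℍ[ℝ])) ^ 2 := by
    rw [hc, hb, Quaternion.coe_pow]
    noncomm_ring
    rw [hcomm, two_smul]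
    abel
  rw [key, pow_eq_zero_iff (by norm_num : 2 ≠ 0)]
  constructor
  · intro h'
    have hx : x = -((b / 2 : ℝ) : ℍ[ℝ]) := eq_neg_of_add_eq_zero_left h'
    rw [hx, ← Quaternion.coe_neg, show (-(b / 2) : ℝ) = -b / 2 from by ring]
  · intro h'
    rw [h', ← Quaternion.coe_add, show (-b / 2 + b / 2 : ℝ) = 0 from by ring,
      Quaternion.coe_zero]
end

section
/- In ℍ(−1,−1), suppose b is a quaternion with Re(b) = 0 (b purely imaginary), c a quaternion, and suppose reals W, Y satisfy: b + W is invertible, Y² − (A + W²)Y + B = 0, and W³ + (A − 2Y)W + C = 0, where A = |b|² + 2Re(c), B = |c|², C = 2Re(conj(b)·c). Then x = −(b + W)⁻¹(c − Y) satisfies x² + bx + c = 0. -/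
/-!
Every quaternion satisfies its Cayley–Hamilton relation `x² - 2 Re(x) x + |x|² = 0`.
For `x = -(b + W)⁻¹ (c - Y)` the hypotheses on `W` and `Y` say exactly that
`2 Re(x) = W` and `|x|² = Y`, while `(b + W) x = Y - c` rewrites `x² + b x + c` as
`x² - W x + Y`.
-/

namespace Quaternion

section CommRing

variable {R : Type*} [CommRing R]

theorem sq_sub_two_re_mul_add_normSq (x : ℍ[R]) :
    x ^ 2 - ((2 * x.re : R) : ℍ[R]) * x + ((normSq x : R) : ℍ[R]) = 0 := by
  rw [← self_add_star', ← star_mul_self]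
  noncomm_ring

theorem normSq_add_coe (a : ℍ[R]) (r : R) :
    normSq (a + (r : ℍ[R])) = normSq a + 2 * r * a.re + r ^ 2 := by
  rw [normSq_add, normSq_coe, star_coe, mul_coe_eq_smul, re_smul, smul_eq_mul]
  ring

theorem normSq_sub_coe (a : ℍ[R]) (r : R) :
    normSq (a - (r : ℍ[R])) = normSq a - 2 * r * a.re + r ^ 2 := by
  rw [sub_eq_add_neg, ← coe_neg, normSq_add_coe]
  ring

theorem re_star_add_coe_mul_sub_coe (a b : ℍ[R]) (r s : R) :
    (star (a + (r : ℍ[R])) * (b - (s : ℍ[R]))).re =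
      (star a * b).re - s * a.re + r * b.re - r * s := by
  simp only [star_add, star_coe, add_mul, mul_sub, re_add, re_sub, mul_coe_eq_smul,
    coe_mul_eq_smul, re_smul, smul_eq_mul, re_star, re_coe]
  ring

end CommRing

section Field

variable {R : Type*} [Field R] [LinearOrder R] [IsStrictOrderedRing R]

theorem re_inv_mul (a b : ℍ[R]) : (a⁻¹ * b).re = (star a * b).re / normSq a := by
  rw [inv_def, smul_mul_assoc, re_smul, smul_eq_mul, inv_mul_eq_div]

theorem normSq_inv_mul (a b : ℍ[R]) : normSq (a⁻¹ * b) = normSq b / normSq a := by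
  rw [map_mul, normSq_inv, inv_mul_eq_div]

end Field

end Quaternion

open Quaternion

theorem case4_key (b c : ℍ[ℝ]) (hb : b.re = 0) (W Y : ℝ)
    (hinv : b + (W : ℍ[ℝ]) ≠ 0)
    (h1 : Y ^ 2 - ((normSq b + 2 * c.re) + W ^ 2) * Y + normSq c = 0)
    (h2 : W ^ 3 + ((normSq b + 2 * c.re) - 2 * Y) * W + 2 * (star b * c).re = 0) :
    let x : ℍ[ℝ] := -((b + (W : ℍ[ℝ]))⁻¹ * (c - (Y : ℍ[ℝ])))
    x ^ 2 + b * x + c = 0 := by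
  intro x
  have hnormSq_u : normSq (b + (W : ℍ[ℝ])) = normSq b + W ^ 2 := by
    rw [normSq_add_coe, hb, mul_zero, add_zero]
  have hu : normSq b + W ^ 2 ≠ 0 := hnormSq_u ▸ normSq_ne_zero.2 hinv
  have hre : 2 * x.re = W := by
    rw [re_neg, re_inv_mul, hnormSq_u, re_star_add_coe_mul_sub_coe, hb]
    field_simp
    linear_combination -h2
  have hnormSq : normSq x = Y := by
    rw [normSq_neg, normSq_inv_mul, hnormSq_u, normSq_sub_coe]
    field_simp
    linear_combination h1
  have hux : (b + (W : ℍ[ℝ])) * x = -(c - (Y : ℍ[ℝ])) := by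
    simp only [x, mul_neg, mul_inv_cancel_left₀ hinv]
  calc x ^ 2 + b * x + c
        = x ^ 2 - (W : ℍ[ℝ]) * x + (Y : ℍ[ℝ])
          + ((b + (W : ℍ[ℝ])) * x + (c - (Y : ℍ[ℝ]))) := by
        noncomm_ring
    _ = x ^ 2 - ((2 * x.re : ℝ) : ℍ[ℝ]) * x + ((normSq x : ℝ) : ℍ[ℝ]) := by
        rw [hux, hre, hnormSq, neg_add_cancel, add_zero]
    _ = 0 := sq_sub_two_re_mul_add_normSq x
end
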